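/- With notation as above, p = Π(t | (T₂+T₃) ∩ T₂^⊥) = 0 if and only if t = s − Π(s|T₂) is orthogonal to T₃. -/

import Mathlib

open scoped RealInnerProductSpace

namespace Submodule

variable {𝕜 E : Type*} [RCLike 𝕜] [NormedAddCommGroup E] [InnerProductSpace 𝕜 E]

theorem orthogonal_inf_orthogonal_inf_eq_orthogonal {K₁ K₂ : Submodule 𝕜 E} (h : K₁ ≤ K₂)
    [K₁.HasOrthogonalProjection] : K₁ᗮ ⊓ (K₁ᗮ ⊓ K₂)ᗮ = K₂ᗮ := by
  rw [inf_orthogonal, sup_orthogonal_inf_of_hasOrthogonalProjection h]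

/-- This is the decomposition `Kᗮ = ((K ⊔ L) ⊓ Kᗮ) ⊕ (Kᗮ ⊓ Lᗮ)` read on a vector of `Kᗮ`. -/
theorem mem_orthogonal_sup_inf_orthogonal_iff {K L : Submodule 𝕜 E} [K.HasOrthogonalProjection]
    {v : E} (hv : v ∈ Kᗮ) : v ∈ ((K ⊔ L) ⊓ Kᗮ)ᗮ ↔ v ∈ Lᗮ := by
  have h := orthogonal_inf_orthogonal_inf_eq_orthogonal (le_sup_left : K ≤ K ⊔ L)
  rw [← inf_orthogonal, inf_comm Kᗮ (K ⊔ L)] at h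
  simpa [hv] using SetLike.ext_iff.mp h v

end Submodule

theorem projection_eq_zero_iff_orthogonal_general
    {H : Type*} [NormedAddCommGroup H] [InnerProductSpace ℝ H]
    (T₂ T₃ : Submodule ℝ H) [FiniteDimensional ℝ T₂]
    [CompleteSpace ↥((T₂ ⊔ T₃) ⊓ T₂ᗮ)]
    (s t p : H)
    (ht : t = s - Submodule.orthogonalProjection T₂ s)
    (hp : p = Submodule.orthogonalProjection ((T₂ ⊔ T₃) ⊓ T₂ᗮ) t) :
    p = 0 ↔ ∀ b ∈ T₃, ⟪t, b⟫ = 0 := by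
  have htT₂ : t ∈ T₂ᗮ := ht ▸ T₂.sub_starProjection_mem_orthogonal s
  rw [hp, ZeroMemClass.coe_eq_zero, Submodule.orthogonalProjectionOnto_eq_zero_iff,
    Submodule.mem_orthogonal_sup_inf_orthogonal_iff htT₂, Submodule.mem_orthogonal']

/-- With `t = s − Π(s|T₂)` and `p = Π(t | (T₂⊔T₃) ⊓ T₂ᗮ)`, one has `p = 0` if and only if
`t` is orthogonal to `T₃`. -/
theorem projection_eq_zero_iff_orthogonal
    {H : Type*} [NormedAddCommGroup H] [InnerProductSpace ℝ H] [CompleteSpace H]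
    (T₂ T₃ : Submodule ℝ H) [FiniteDimensional ℝ T₂] [CompleteSpace T₃]
    [CompleteSpace ↥(T₂ ⊔ T₃)] [CompleteSpace ↥((T₂ ⊔ T₃) ⊓ T₂ᗮ)]
    (s t p : H)
    (ht : t = s - Submodule.orthogonalProjection T₂ s)
    (hp : p = Submodule.orthogonalProjection ((T₂ ⊔ T₃) ⊓ T₂ᗮ) t) :
    p = 0 ↔ ∀ b ∈ T₃, ⟪t, b⟫ = 0 :=
  projection_eq_zero_iff_orthogonal_general T₂ T₃ s t p ht hp
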